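/- arXiv:1401.5434 — 4 statements merged into one kernel-verified Lean document; each statement's English description precedes it below -/
import Mathlib

section
/- Let d ≥ 1 and let μ be a Borel probability measure on ℝ^d with finite moments of all orders. For n ∈ ℕ let V_n ⊆ L²(μ) be the (finite-dimensional, hence closed) image of 𝒫_{n]} under the natural map sending a polynomial to its equivalence class in L²(μ), with V_{−1} = {0}; let E_n : L²(μ) → L²(μ) be the difference proj_{V_n} − proj_{V_{n−1}} of the orthogonal projections onto V_n and V_{n−1}; and for j ∈ {1,…,d} let M_j denote multiplication by the coordinate function x_j (which is well defined from V_n to V_{n+1}). Then the creation operators commute: for all n ∈ ℕ, all j, k ∈ {1,…,d}, and every f ∈ V_n with f orthogonal to V_{n−1}, one has E_{n+2}( M_j ( E_{n+1}( M_k f ) ) ) = E_{n+2}( M_k ( E_{n+1}( M_j f ) ) ). -/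
open MeasureTheory MvPolynomial
open scoped RealInnerProductSpace

/-- The image `V_n` of the space of polynomials of total degree `≤ n` in `L²(μ)`,
under the natural map `T` sending a polynomial to its class in `L²(μ)`. -/
noncomputable def polyImage {d : ℕ} (μ : Measure (Fin d → ℝ))
    (T : MvPolynomial (Fin d) ℝ →ₗ[ℝ] Lp ℝ 2 μ) (n : ℕ) : Submodule ℝ (Lp ℝ 2 μ) :=
  (restrictTotalDegree (Fin d) ℝ n).map T

instance polyImage.hasOrthogonalProjection {d : ℕ} (μ : Measure (Fin d → ℝ))
    (T : MvPolynomial (Fin d) ℝ →ₗ[ℝ] Lp ℝ 2 μ) (n : ℕ) :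
    Submodule.HasOrthogonalProjection (polyImage μ T n) := by
  unfold polyImage; infer_instance

/-- `E_n = proj_{V_n} - proj_{V_{n-1}}` (only used for `n ≥ 1`). -/
noncomputable def projDiff {d : ℕ} (μ : Measure (Fin d → ℝ))
    (T : MvPolynomial (Fin d) ℝ →ₗ[ℝ] Lp ℝ 2 μ) (n : ℕ) (g : Lp ℝ 2 μ) : Lp ℝ 2 μ :=
  ((Submodule.orthogonalProjection (polyImage μ T n) g : Lp ℝ 2 μ) -
    (Submodule.orthogonalProjection (polyImage μ T (n - 1)) g : Lp ℝ 2 μ))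


lemma memPolyImage {d : ℕ} (μ : Measure (Fin d → ℝ))
    (T : MvPolynomial (Fin d) ℝ →ₗ[ℝ] Lp ℝ 2 μ) {m : ℕ} {Q : MvPolynomial (Fin d) ℝ}
    (h : Q.totalDegree ≤ m) : T Q ∈ polyImage μ T m :=
  ⟨Q, (mem_restrictTotalDegree _ _ _).2 h, rfl⟩

lemma degX_mul {d : ℕ} (j : Fin d) {P : MvPolynomial (Fin d) ℝ} {m : ℕ}
    (h : P.totalDegree ≤ m) : (X j * P).totalDegree ≤ m + 1 := by
  calc (X j * P).totalDegree ≤ (X j : MvPolynomial (Fin d) ℝ).totalDegree + P.totalDegree :=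
        totalDegree_mul _ _
    _ ≤ 1 + m := by rw [totalDegree_X]; omega
    _ = m + 1 := by omega

lemma projDiff_succ {d : ℕ} (μ : Measure (Fin d → ℝ))
    (T : MvPolynomial (Fin d) ℝ →ₗ[ℝ] Lp ℝ 2 μ) (m : ℕ) (g : Lp ℝ 2 μ) :
    projDiff μ T (m + 1) g = (Submodule.orthogonalProjection (polyImage μ T (m + 1)) g : Lp ℝ 2 μ) -
      (Submodule.orthogonalProjection (polyImage μ T m) g : Lp ℝ 2 μ) := rfl

lemma aux_step {d : ℕ} (μ : Measure (Fin d → ℝ))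
    (T : MvPolynomial (Fin d) ℝ →ₗ[ℝ] Lp ℝ 2 μ)
    (M : Fin d → Lp ℝ 2 μ → Lp ℝ 2 μ)
    (hM : ∀ (j : Fin d) (P : MvPolynomial (Fin d) ℝ), M j (T P) = T (X j * P))
    (n : ℕ) (j k : Fin d) (P : MvPolynomial (Fin d) ℝ) (hP : P.totalDegree ≤ n) :
    projDiff μ T (n + 2) (M j (projDiff μ T (n + 1) (M k (T P)))) =
      T (X j * (X k * P)) -
        (Submodule.orthogonalProjection (polyImage μ T (n + 1)) (T (X j * (X k * P))) : Lp ℝ 2 μ) := by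
  have hkP : (X k * P).totalDegree ≤ n + 1 := degX_mul k hP
  have h1 : (Submodule.orthogonalProjection (polyImage μ T (n + 1)) (T (X k * P)) : Lp ℝ 2 μ)
      = T (X k * P) := Submodule.starProjection_eq_self_iff.2 (memPolyImage μ T hkP)
  obtain ⟨Q, hQmem, hQ⟩ :
      (Submodule.orthogonalProjection (polyImage μ T n) (T (X k * P)) : Lp ℝ 2 μ) ∈ polyImage μ T n :=
    SetLike.coe_mem _
  have hQdeg : Q.totalDegree ≤ n := (mem_restrictTotalDegree _ _ _).1 hQmem
  have e1 : projDiff μ T (n + 1) (M k (T P)) = T (X k * P - Q) := by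
    rw [hM, projDiff_succ, h1, map_sub, hQ]
  rw [e1, hM]
  have hjk : (X j * (X k * P)).totalDegree ≤ n + 2 := degX_mul j hkP
  have hjQ : (X j * Q).totalDegree ≤ n + 1 := degX_mul j hQdeg
  have expand : T (X j * (X k * P - Q)) = T (X j * (X k * P)) - T (X j * Q) := by
    rw [show X j * (X k * P - Q) = X j * (X k * P) - X j * Q by ring, map_sub]
  rw [show n + 2 = (n + 1) + 1 by rfl, projDiff_succ, expand]
  have h2 : (Submodule.orthogonalProjection (polyImage μ T (n + 1 + 1))
      (T (X j * (X k * P)) - T (X j * Q)) : Lp ℝ 2 μ)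
      = T (X j * (X k * P)) - T (X j * Q) :=
    Submodule.starProjection_eq_self_iff.2 (Submodule.sub_mem _ (memPolyImage μ T hjk)
      (memPolyImage μ T (hjQ.trans (by omega))))
  have h3 : (Submodule.orthogonalProjection (polyImage μ T (n + 1)) (T (X j * Q)) : Lp ℝ 2 μ)
      = T (X j * Q) := Submodule.starProjection_eq_self_iff.2 (memPolyImage μ T hjQ)
  rw [h2, map_sub, Submodule.coe_sub, h3]
  abel

theorem creation_operators_commute
    (d : ℕ) (hd : 1 ≤ d)
    (μ : Measure (Fin d → ℝ)) [IsProbabilityMeasure μ]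
    (hmom : ∀ m : Fin d → ℕ, Integrable (fun x => ∏ i, x i ^ m i) μ)
    (T : MvPolynomial (Fin d) ℝ →ₗ[ℝ] Lp ℝ 2 μ)
    (hT : ∀ P : MvPolynomial (Fin d) ℝ,
      (T P : (Fin d → ℝ) → ℝ) =ᵐ[μ] fun x => eval x P)
    (M : Fin d → Lp ℝ 2 μ → Lp ℝ 2 μ)
    (hM : ∀ (j : Fin d) (P : MvPolynomial (Fin d) ℝ), M j (T P) = T (X j * P))
    (n : ℕ) (j k : Fin d) (f : Lp ℝ 2 μ)
    (hf : f ∈ polyImage μ T n)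
    (horth : ∀ R : MvPolynomial (Fin d) ℝ, R.totalDegree < n → ⟪f, T R⟫ = 0) :
    projDiff μ T (n + 2) (M j (projDiff μ T (n + 1) (M k f))) =
      projDiff μ T (n + 2) (M k (projDiff μ T (n + 1) (M j f))) := by
  obtain ⟨P, hPmem, hPf⟩ := hf
  have hPdeg : P.totalDegree ≤ n := (mem_restrictTotalDegree _ _ _).1 hPmem
  subst hPf
  rw [aux_step μ T M hM n j k P hPdeg, aux_step μ T M hM n k j P hPdeg,
    show X j * (X k * P) = X k * (X j * P) by ring]
end

section
/- Let d ≥ 1 and let μ be a Borel probability measure on ℝ^d with finite moments of all orders. Suppose there exists n₀ ∈ ℕ such that every real polynomial Q of total degree ≤ n₀ satisfying ⟨Q,R⟩_μ = 0 for all polynomials R of total degree ≤ n₀−1 necessarily satisfies ∫_{ℝ^d} Q(x)² dμ(x) = 0. Then for every n ≥ n₀ the same holds: every real polynomial Q of total degree ≤ n satisfying ⟨Q,R⟩_μ = 0 for all polynomials R of total degree ≤ n−1 satisfies ∫_{ℝ^d} Q(x)² dμ(x) = 0. (This expresses that if the Jacobi matrix Ω_{n₀} vanishes, then Ω_n = 0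 for all n ≥ n₀.) -/
open MeasureTheory MvPolynomial

namespace JacobiAux

/-- All monomial moments are integrable. -/
def MomCond {d : ℕ} (μ : Measure (Fin d → ℝ)) : Prop :=
  ∀ m : Fin d → ℕ, Integrable (fun x => ∏ i, x i ^ m i) μ

variable {d : ℕ} {μ : Measure (Fin d → ℝ)}

theorem integrable_eval (hmom : MomCond μ)
    (Q : MvPolynomial (Fin d) ℝ) : Integrable (fun x => eval x Q) μ := by
  have hfun : (fun x : Fin d → ℝ => eval x Q) =
      fun x => ∑ m ∈ Q.support, Q.coeff m * ∏ i, x i ^ m i := by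
    funext x; exact eval_eq' x Q
  rw [hfun]
  exact integrable_finset_sum _ fun m _ => (hmom m).const_mul _

theorem memL2 (hmom : MomCond μ)
    (Q : MvPolynomial (Fin d) ℝ) : MemLp (fun x => eval x Q) 2 μ := by
  refine (memLp_two_iff_integrable_sq (integrable_eval hmom Q).aestronglyMeasurable).2 ?_
  have h1 : Integrable (fun x => eval x Q * eval x Q) μ := by
    simpa only [map_mul] using integrable_eval hmom (Q * Q)
  simpa only [pow_two] using h1

theorem toLp_congr {f g : (Fin d → ℝ) → ℝ} (hf : MemLp f 2 μ) (hg : MemLp g 2 μ)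
    (h : f = g) : hf.toLp f = hg.toLp g := by subst h; rfl

/-- The evaluation map into `L²(μ)` as a linear map. -/
noncomputable def L (hmom : MomCond μ) :
    MvPolynomial (Fin d) ℝ →ₗ[ℝ] Lp ℝ 2 μ where
  toFun Q := (memL2 hmom Q).toLp _
  map_add' P Q := by
    rw [toLp_congr (memL2 hmom (P + Q)) ((memL2 hmom P).add (memL2 hmom Q))
      (funext fun x => by simp), MemLp.toLp_add]
  map_smul' c Q := by
    rw [RingHom.id_apply,
      toLp_congr (memL2 hmom (c • Q)) ((memL2 hmom Q).const_smul c)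
        (funext fun x => by simp [MvPolynomial.smul_eval]),
      MemLp.toLp_const_smul]

theorem L_apply (hmom : MomCond μ) (Q : MvPolynomial (Fin d) ℝ) :
    L hmom Q = (memL2 hmom Q).toLp _ := rfl

theorem L_eq_iff (hmom : MomCond μ) (P Q : MvPolynomial (Fin d) ℝ) :
    L hmom P = L hmom Q ↔ (fun x => eval x P) =ᵐ[μ] (fun x => eval x Q) := by
  rw [L_apply, L_apply]
  exact MemLp.toLp_eq_toLp_iff _ _

theorem L_inner (hmom : MomCond μ) (P Q : MvPolynomial (Fin d) ℝ) :
    (inner ℝ (L hmom P) (L hmom Q) : ℝ) = ∫ x, eval x P * eval x Q ∂μ := by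
  rw [L2.inner_def]
  apply integral_congr_ae
  filter_upwards [(memL2 hmom P).coeFn_toLp, (memL2 hmom Q).coeFn_toLp] with x h1 h2
  simp only [L_apply] at h1 h2 ⊢
  simp [h1, h2, RCLike.inner_apply, mul_comm]

theorem sq_integral_zero_iff (hmom : MomCond μ) (Q : MvPolynomial (Fin d) ℝ) :
    ∫ x, (eval x Q) ^ 2 ∂μ = 0 ↔ (fun x => eval x Q) =ᵐ[μ] 0 := by
  have hint : Integrable (fun x => (eval x Q) ^ 2) μ := by
    have h1 : Integrable (fun x => eval x Q * eval x Q) μ := by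
      simpa only [map_mul] using integrable_eval hmom (Q * Q)
    simpa only [pow_two] using h1
  rw [integral_eq_zero_iff_of_nonneg (fun x => sq_nonneg _) hint]
  constructor <;> intro hx <;> filter_upwards [hx] with x hx
  · simpa using sq_eq_zero_iff.1 (by simpa using hx)
  · simp only [Pi.zero_apply] at hx ⊢
    simp [hx]

theorem exists_lower [IsProbabilityMeasure μ] (hmom : MomCond μ)
    (n₀ : ℕ) (hn₀ : 1 ≤ n₀)
    (h : ∀ Q : MvPolynomial (Fin d) ℝ, Q.totalDegree ≤ n₀ →
      (∀ R : MvPolynomial (Fin d) ℝ, R.totalDegree < n₀ →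
        ∫ x, eval x Q * eval x R ∂μ = 0) →
      ∫ x, (eval x Q) ^ 2 ∂μ = 0)
    (P : MvPolynomial (Fin d) ℝ) (hP : P.totalDegree ≤ n₀) :
    ∃ R : MvPolynomial (Fin d) ℝ, R.totalDegree < n₀ ∧ L hmom P = L hmom R := by
  set V := restrictTotalDegree (Fin d) ℝ (n₀ - 1) with hV
  set S : Submodule ℝ (Lp ℝ 2 μ) := V.map (L hmom) with hS
  haveI : FiniteDimensional ℝ S := Module.Finite.map _ _
  haveI : CompleteSpace S := FiniteDimensional.complete ℝ S
  set v : Lp ℝ 2 μ := L hmom P with hv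
  have hproj : (↑(Submodule.orthogonalProjectionOnto S v) : Lp ℝ 2 μ) ∈ S := (Submodule.orthogonalProjectionOnto S v).2
  obtain ⟨R₀, hR₀V, hR₀⟩ := Submodule.mem_map.mp hproj
  have hR₀deg : R₀.totalDegree < n₀ := by
    have := (mem_restrictTotalDegree (Fin d) (n₀ - 1) R₀).mp hR₀V
    omega
  refine ⟨R₀, hR₀deg, ?_⟩
  have horth : ∀ T : MvPolynomial (Fin d) ℝ, T.totalDegree < n₀ →
      ∫ x, eval x (P - R₀) * eval x T ∂μ = 0 := by
    intro T hT
    rw [← L_inner hmom]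
    have hmem : L hmom T ∈ S :=
      Submodule.mem_map_of_mem ((mem_restrictTotalDegree (Fin d) (n₀ - 1) T).mpr (by omega))
    have hsub : v - ↑(Submodule.orthogonalProjectionOnto S v) ∈ Sᗮ :=
      Submodule.sub_starProjection_mem_orthogonal v
    have hLsub : L hmom (P - R₀) = v - ↑(Submodule.orthogonalProjectionOnto S v) := by
      rw [map_sub, hR₀]
    rw [hLsub, real_inner_comm]
    exact hsub (L hmom T) hmem
  have hdegsub : (P - R₀).totalDegree ≤ n₀ := by
    refine le_trans (sub_eq_add_neg P R₀ ▸ totalDegree_add P (-R₀)) ?_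
    simp only [totalDegree_neg]
    exact max_le hP hR₀deg.le
  have hzero := h (P - R₀) hdegsub horth
  have hae : (fun x => eval x (P - R₀)) =ᵐ[μ] 0 := (sq_integral_zero_iff hmom _).1 hzero
  rw [L_eq_iff]
  filter_upwards [hae] with x hx
  simp only [map_sub, Pi.zero_apply] at hx ⊢
  linarith

theorem exists_lower_all [IsProbabilityMeasure μ] (hmom : MomCond μ)
    (n₀ : ℕ) (hn₀ : 1 ≤ n₀)
    (h : ∀ Q : MvPolynomial (Fin d) ℝ, Q.totalDegree ≤ n₀ →
      (∀ R : MvPolynomial (Fin d) ℝ, R.totalDegree < n₀ →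
        ∫ x, eval x Q * eval x R ∂μ = 0) →
      ∫ x, (eval x Q) ^ 2 ∂μ = 0)
    (P : MvPolynomial (Fin d) ℝ) :
    ∃ R : MvPolynomial (Fin d) ℝ, R.totalDegree < n₀ ∧ L hmom P = L hmom R := by
  induction P using MvPolynomial.induction_on with
  | C a =>
      exact ⟨C a, by simp [totalDegree_C]; omega, rfl⟩
  | add p q hp hq =>
      obtain ⟨r₁, hr₁, hL₁⟩ := hp
      obtain ⟨r₂, hr₂, hL₂⟩ := hq
      exact ⟨r₁ + r₂, lt_of_le_of_lt (totalDegree_add r₁ r₂) (max_lt hr₁ hr₂),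
        by rw [map_add, map_add, hL₁, hL₂]⟩
  | mul_X p i hp =>
      obtain ⟨r, hr, hL⟩ := hp
      have hae : (fun x => eval x p) =ᵐ[μ] (fun x => eval x r) := (L_eq_iff hmom p r).1 hL
      have hL' : L hmom (p * X i) = L hmom (r * X i) := by
        rw [L_eq_iff]
        filter_upwards [hae] with x hx
        simp [hx]
      have hdeg : (r * X i).totalDegree ≤ n₀ := by
        refine le_trans (totalDegree_mul r (X i)) ?_
        have h1 : (X i : MvPolynomial (Fin d) ℝ).totalDegree = 1 := totalDegree_X i
        omega
      obtain ⟨r', hr', hL''⟩ := exists_lower hmom n₀ hn₀ h (r * X i) hdeg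
      exact ⟨r', hr', by rw [hL', hL'']⟩

end JacobiAux

open JacobiAux in
/-- If every polynomial of total degree `≤ n₀` that is `μ`-orthogonal to all polynomials of
total degree `< n₀` has zero `μ`-norm (i.e. the Jacobi matrix `Ω_{n₀}` vanishes), then the same
holds at every level `n ≥ n₀` (i.e. `Ω_n = 0` for all `n ≥ n₀`). -/
theorem jacobi_matrix_vanishing_propagates
    (d : ℕ) (hd : 1 ≤ d)
    (μ : Measure (Fin d → ℝ)) [IsProbabilityMeasure μ]
    (hmom : ∀ m : Fin d → ℕ, Integrable (fun x => ∏ i, x i ^ m i) μ)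
    (n₀ : ℕ)
    (h : ∀ Q : MvPolynomial (Fin d) ℝ, Q.totalDegree ≤ n₀ →
      (∀ R : MvPolynomial (Fin d) ℝ, R.totalDegree < n₀ →
        ∫ x, eval x Q * eval x R ∂μ = 0) →
      ∫ x, (eval x Q) ^ 2 ∂μ = 0) :
    ∀ n : ℕ, n₀ ≤ n →
      ∀ Q : MvPolynomial (Fin d) ℝ, Q.totalDegree ≤ n →
        (∀ R : MvPolynomial (Fin d) ℝ, R.totalDegree < n →
          ∫ x, eval x Q * eval x R ∂μ = 0) →
        ∫ x, (eval x Q) ^ 2 ∂μ = 0 := by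
  have hmom' : MomCond μ := hmom
  intro n hn Q hQdeg horth
  rcases Nat.eq_zero_or_pos n₀ with h0 | hn₀
  · exfalso
    have h1 := h 1 (by simp [h0]) (fun R hR => absurd hR (by omega))
    simp at h1
  obtain ⟨R, hRdeg, hLR⟩ := exists_lower_all hmom' n₀ hn₀ h Q
  have haeQR : (fun x => eval x Q) =ᵐ[μ] (fun x => eval x R) := (L_eq_iff hmom' Q R).1 hLR
  have horthR : ∀ S : MvPolynomial (Fin d) ℝ, S.totalDegree < n₀ →
      ∫ x, eval x R * eval x S ∂μ = 0 := by
    intro S hS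
    have h1 : ∫ x, eval x Q * eval x S ∂μ = 0 := horth S (lt_of_lt_of_le hS hn)
    rw [← h1]
    apply integral_congr_ae
    filter_upwards [haeQR] with x hx
    rw [hx]
  have hR2 := h R hRdeg.le horthR
  have haeR : (fun x => eval x R) =ᵐ[μ] 0 := (sq_integral_zero_iff hmom' R).1 hR2
  have haeQ : (fun x => eval x Q) =ᵐ[μ] 0 := haeQR.trans haeR
  exact (sq_integral_zero_iff hmom' Q).2 haeQ
end

section
/- Let d ≥ 1 and let μ be a Borel probability measure on ℝ^d with finite moments of all orders. Suppose there exists n₀ ∈ ℕ, n₀ ≥ 1, such that every real polynomial Q of total degree ≤ n₀ satisfying ⟨Q,R⟩_μ = 0 for all polynomials R of total degree ≤ n₀−1 necessarily satisfies ∫_{ℝ^d} Q(x)² dμ(x) = 0. Then μ is atomic with a finite number of atoms: there exist a finite set {x_i}_{i∈I} ⊆ ℝ^d of distinct points and weights a_i > 0 with Σ_{i∈I} a_i = 1 such that μ = Σ_{i∈I} a_i δ_{x_i}. -/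
open MeasureTheory MvPolynomial

set_option maxHeartbeats 2000000

section Aux

variable {d : ℕ} {μ : Measure (Fin d → ℝ)}

private lemma integrable_eval
    (hmom : ∀ m : Fin d → ℕ, Integrable (fun x => ∏ i, x i ^ m i) μ)
    (P : MvPolynomial (Fin d) ℝ) : Integrable (fun x => eval x P) μ := by
  induction P using MvPolynomial.induction_on' with
  | monomial m c =>
    have := (hmom fun i => m i).const_mul c
    refine this.congr ?_
    filter_upwards with x
    simp [eval_monomial, Finsupp.prod_pow]
  | add p q hp hq =>
    exact (hp.add hq).congr (Filter.Eventually.of_forall fun x => by simp)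

private lemma memL2_eval
    (hmom : ∀ m : Fin d → ℕ, Integrable (fun x => ∏ i, x i ^ m i) μ)
    (P : MvPolynomial (Fin d) ℝ) : MemLp (fun x => eval x P) 2 μ := by
  have hc : Continuous fun x : Fin d → ℝ => eval x P := MvPolynomial.continuous_eval P
  refine (memLp_two_iff_integrable_sq hc.aestronglyMeasurable).2 ?_
  have := integrable_eval hmom (P * P)
  refine this.congr ?_
  filter_upwards with x
  simp [pow_two]

/-- The linear map sending a polynomial to its class in `L²(μ)`. -/
private noncomputable def Tmap
    (hmom : ∀ m : Fin d → ℕ, Integrable (fun x => ∏ i, x i ^ m i) μ) :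
    MvPolynomial (Fin d) ℝ →ₗ[ℝ] Lp ℝ 2 μ where
  toFun P := (memL2_eval hmom P).toLp _
  map_add' P Q := by
    rw [← MemLp.toLp_add (memL2_eval hmom P) (memL2_eval hmom Q)]
    refine MemLp.toLp_congr _ _ ?_
    filter_upwards with x
    simp
  map_smul' c P := by
    have h1 : (fun x => eval x (c • P)) =ᵐ[μ] (c • fun x => eval x P) := by
      filter_upwards with x
      simp [smul_eval]
    show MemLp.toLp _ (memL2_eval hmom (c • P)) = c • MemLp.toLp _ (memL2_eval hmom P)
    rw [MemLp.toLp_congr (memL2_eval hmom (c • P)) ((memL2_eval hmom P).const_smul c) h1,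
      MemLp.toLp_const_smul c]

private lemma Tmap_apply
    (hmom : ∀ m : Fin d → ℕ, Integrable (fun x => ∏ i, x i ^ m i) μ)
    (P : MvPolynomial (Fin d) ℝ) :
    Tmap hmom P = (memL2_eval hmom P).toLp _ := rfl

private lemma Tmap_eq_iff
    (hmom : ∀ m : Fin d → ℕ, Integrable (fun x => ∏ i, x i ^ m i) μ)
    (P Q : MvPolynomial (Fin d) ℝ) :
    Tmap hmom P = Tmap hmom Q ↔
      (fun x => eval x P) =ᵐ[μ] (fun x => eval x Q) := by
  rw [Tmap_apply, Tmap_apply]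
  exact MemLp.toLp_eq_toLp_iff _ _

private lemma coeFn_Tmap
    (hmom : ∀ m : Fin d → ℕ, Integrable (fun x => ∏ i, x i ^ m i) μ)
    (P : MvPolynomial (Fin d) ℝ) :
    (Tmap hmom P : (Fin d → ℝ) → ℝ) =ᵐ[μ] fun x => eval x P := by
  rw [Tmap_apply]
  exact MemLp.coeFn_toLp _

private lemma inner_Tmap
    (hmom : ∀ m : Fin d → ℕ, Integrable (fun x => ∏ i, x i ^ m i) μ)
    (P Q : MvPolynomial (Fin d) ℝ) :
    (inner ℝ (Tmap hmom P) (Tmap hmom Q) : ℝ) = ∫ x, eval x P * eval x Q ∂μ := by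
  rw [L2.inner_def]
  refine integral_congr_ae ?_
  filter_upwards [coeFn_Tmap hmom P, coeFn_Tmap hmom Q] with x h1 h2
  rw [RCLike.inner_apply, conj_trivial, h1, h2, mul_comm]

end Aux

/-- If for some `n₀ ≥ 1` every polynomial of total degree `≤ n₀` that is `μ`-orthogonal to all
polynomials of total degree `< n₀` has zero `μ`-norm (i.e. the Jacobi matrix `Ω_{n₀}` vanishes),
then `μ` is atomic with finitely many atoms: `μ = Σᵢ aᵢ δ_{xᵢ}` for finitely many distinct
points `xᵢ` and weights `aᵢ > 0` with `Σᵢ aᵢ = 1`. -/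
theorem vanishing_jacobi_implies_finitely_atomic
    (d : ℕ) (hd : 1 ≤ d)
    (μ : Measure (Fin d → ℝ)) [IsProbabilityMeasure μ]
    (hmom : ∀ m : Fin d → ℕ, Integrable (fun x => ∏ i, x i ^ m i) μ)
    (n₀ : ℕ) (hn₀ : 1 ≤ n₀)
    (h : ∀ Q : MvPolynomial (Fin d) ℝ, Q.totalDegree ≤ n₀ →
      (∀ R : MvPolynomial (Fin d) ℝ, R.totalDegree < n₀ →
        ∫ x, eval x Q * eval x R ∂μ = 0) →
      ∫ x, (eval x Q) ^ 2 ∂μ = 0) :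
    ∃ (s : Finset (Fin d → ℝ)) (a : (Fin d → ℝ) → ℝ),
      (∀ x ∈ s, 0 < a x) ∧
      (∑ x ∈ s, a x = 1) ∧
      μ = ∑ x ∈ s, ENNReal.ofReal (a x) • Measure.dirac x := by
  classical
  -- the image of the low-degree polynomials in L²(μ)
  set W : Submodule ℝ (Lp ℝ 2 μ) :=
    (restrictTotalDegree (Fin d) ℝ (n₀ - 1)).map (Tmap hmom) with hW
  haveI : FiniteDimensional ℝ W := Module.Finite.map _ _
  haveI : CompleteSpace W := FiniteDimensional.complete ℝ W
  -- Lemma A : every degree ≤ n₀ polynomial agrees a.e. with a degree ≤ n₀-1 polynomial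
  have lemA : ∀ Q : MvPolynomial (Fin d) ℝ, Q.totalDegree ≤ n₀ →
      ∃ R, R.totalDegree ≤ n₀ - 1 ∧ Tmap hmom Q = Tmap hmom R := by
    intro Q hQ
    obtain ⟨R₀, hR₀mem, hR₀⟩ := (W.orthogonalProjectionOnto (Tmap hmom Q)).2
    have hR₀deg : R₀.totalDegree ≤ n₀ - 1 :=
      (mem_restrictTotalDegree _ _ _).1 hR₀mem
    set Q' := Q - R₀ with hQ'
    have hdeg' : Q'.totalDegree ≤ n₀ := by
      have h1 : (Q - R₀).totalDegree ≤ max Q.totalDegree (-R₀).totalDegree := by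
        simpa [sub_eq_add_neg] using totalDegree_add Q (-R₀)
      rw [totalDegree_neg] at h1
      exact h1.trans (max_le hQ (hR₀deg.trans (Nat.sub_le _ _)))
    have horth : Tmap hmom Q' ∈ Wᗮ := by
      have heq : Tmap hmom Q' = Tmap hmom Q - Tmap hmom R₀ := by
        rw [hQ', map_sub]
      rw [heq, hR₀]
      exact Submodule.sub_starProjection_mem_orthogonal (K := W) _
    have hz : ∫ x, (eval x Q') ^ 2 ∂μ = 0 := by
      refine h Q' hdeg' ?_
      intro R hR
      have hRW : Tmap hmom R ∈ W :=
        ⟨R, (mem_restrictTotalDegree _ _ _).2 (by omega), rfl⟩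
      have := (Submodule.mem_orthogonal W _).1 horth _ hRW
      rw [← inner_Tmap hmom Q' R, real_inner_comm]
      exact this
    have hinner : (inner ℝ (Tmap hmom Q') (Tmap hmom Q') : ℝ) = 0 := by
      rw [inner_Tmap]
      calc ∫ x, eval x Q' * eval x Q' ∂μ = ∫ x, (eval x Q') ^ 2 ∂μ := by
            refine integral_congr_ae ?_
            filter_upwards with x
            ring
        _ = 0 := hz
    have hzero : Tmap hmom Q' = 0 := inner_self_eq_zero.1 hinner
    refine ⟨R₀, hR₀deg, ?_⟩
    have : Tmap hmom Q - Tmap hmom R₀ = 0 := by rw [← map_sub]; exact hzero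
    exact sub_eq_zero.1 this
  -- every polynomial agrees in L² with a polynomial of degree ≤ n₀ - 1
  have key : ∀ P : MvPolynomial (Fin d) ℝ,
      ∃ R, R.totalDegree ≤ n₀ - 1 ∧ Tmap hmom P = Tmap hmom R := by
    intro P
    induction P using MvPolynomial.induction_on with
    | C a =>
      exact ⟨C a, by simp [totalDegree_C], rfl⟩
    | add p q hp hq =>
      obtain ⟨Rp, hRp, hTp⟩ := hp
      obtain ⟨Rq, hRq, hTq⟩ := hq
      refine ⟨Rp + Rq, ?_, by rw [map_add, map_add, hTp, hTq]⟩
      exact (totalDegree_add _ _).trans (max_le hRp hRq)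
    | mul_X p i hp =>
      obtain ⟨Rp, hRp, hTp⟩ := hp
      have hae : (fun x => eval x (p * X i)) =ᵐ[μ] (fun x => eval x (Rp * X i)) := by
        filter_upwards [(Tmap_eq_iff hmom p Rp).1 hTp] with x hx
        simp only [eval_mul]
        rw [hx]
      have hdeg : (Rp * X i).totalDegree ≤ n₀ := by
        refine (totalDegree_mul _ _).trans ?_
        have := totalDegree_X (R := ℝ) i
        omega
      obtain ⟨R, hR, hTR⟩ := lemA _ hdeg
      exact ⟨R, hR, ((Tmap_eq_iff hmom _ _).2 hae).trans hTR⟩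
  have TmemW : ∀ P : MvPolynomial (Fin d) ℝ, Tmap hmom P ∈ W := by
    intro P
    obtain ⟨R, hR, hTR⟩ := key P
    rw [hTR]
    exact ⟨R, (mem_restrictTotalDegree _ _ _).2 hR, rfl⟩
  -- the (topological) support of μ
  set supp : Set (Fin d → ℝ) :=
    {x | ∀ U : Set (Fin d → ℝ), IsOpen U → x ∈ U → 0 < μ U} with hsupp_def
  have hsuppc : μ suppᶜ = 0 := by
    refine measure_null_of_locally_null _ fun x hx => ?_
    simp only [hsupp_def, Set.mem_compl_iff, Set.mem_setOf_eq, not_forall] at hx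
    obtain ⟨U, hUo, hxU, hU0⟩ := hx
    refine ⟨U, mem_nhdsWithin_of_mem_nhds (hUo.mem_nhds hxU), ?_⟩
    simpa [pos_iff_ne_zero] using hU0
  -- the support is finite
  set N := Module.finrank ℝ W with hN
  have hfin : supp.Finite := by
    by_contra hinf
    have hinf' : supp.Infinite := hinf
    let e := Set.Infinite.natEmbedding supp hinf'
    let y : Fin (N + 1) → (Fin d → ℝ) := fun j => (e (j : ℕ) : Fin d → ℝ)
    have hy : Function.Injective y := by
      intro a b hab
      exact Fin.val_injective (e.injective (Subtype.coe_injective hab))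
    have hysupp : ∀ j, y j ∈ supp := fun j => (e (j : ℕ)).2
    have hsep : ∀ j k : Fin (N + 1), j ≠ k → ∃ i, y j i ≠ y k i := by
      intro j k hjk
      by_contra hc
      push_neg at hc
      exact hjk (hy (funext hc))
    let iv : Fin (N + 1) → Fin (N + 1) → Fin d := fun j k =>
      if hjk : ∃ i, y j i ≠ y k i then hjk.choose else ⟨0, hd⟩
    have hiv : ∀ j k, j ≠ k → y j (iv j k) ≠ y k (iv j k) := by
      intro j k hjk
      have hex : ∃ i, y j i ≠ y k i := hsep j k hjk
      simp only [iv, dif_pos hex]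
      exact hex.choose_spec
    let P : Fin (N + 1) → MvPolynomial (Fin d) ℝ := fun j =>
      ∏ k ∈ Finset.univ.erase j,
        C (y j (iv j k) - y k (iv j k))⁻¹ * (X (iv j k) - C (y k (iv j k)))
    have hPval : ∀ j l : Fin (N + 1), eval (y l) (P j) = if l = j then 1 else 0 := by
      intro j l
      by_cases hlj : l = j
      · subst hlj
        rw [if_pos rfl]
        simp only [P, map_prod]
        refine Finset.prod_eq_one fun k hk => ?_
        have hkl : l ≠ k := (Finset.ne_of_mem_erase hk).symm
        simp only [map_mul, eval_C, map_sub, eval_X]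
        exact inv_mul_cancel₀ (sub_ne_zero_of_ne (hiv l k hkl))
      · rw [if_neg hlj]
        simp only [P, map_prod]
        refine Finset.prod_eq_zero (Finset.mem_erase.2 ⟨hlj, Finset.mem_univ l⟩) ?_
        simp
    let v : Fin (N + 1) → W := fun j => ⟨Tmap hmom (P j), TmemW _⟩
    have hnli : ¬ LinearIndependent ℝ v := by
      intro hli
      have hle := hli.fintype_card_le_finrank
      rw [Fintype.card_fin, ← hN] at hle
      omega
    obtain ⟨g, hg0, j₀, hj₀⟩ := Fintype.not_linearIndependent_iff.1 hnli
    set Pb : MvPolynomial (Fin d) ℝ := ∑ j, g j • P j with hPb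
    have hTPb : Tmap hmom Pb = 0 := by
      have h1 : ∑ j, g j • Tmap hmom (P j) = 0 := by
        have h2 := congrArg ((↑) : W → Lp ℝ 2 μ) hg0
        simpa [v] using h2
      rw [hPb, map_sum]
      simp only [_root_.map_smul]
      exact h1
    have hae : ∀ᵐ x ∂μ, eval x Pb = 0 := by
      have h3 := (Tmap_eq_iff hmom Pb 0).1 (by rw [hTPb, map_zero])
      filter_upwards [h3] with x hx
      simpa using hx
    have hval : eval (y j₀) Pb = g j₀ := by
      rw [hPb, map_sum]
      have hterm : ∀ j, eval (y j₀) (g j • P j) = if j₀ = j then g j else 0 := by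
        intro j
        rw [smul_eval, hPval j j₀]
        split
        · next hh => simp
        · next hh => simp
      rw [Finset.sum_congr rfl fun j _ => hterm j]
      simp
    have hopen : IsOpen {x : Fin d → ℝ | eval x Pb ≠ 0} :=
      (isClosed_eq (MvPolynomial.continuous_eval Pb) continuous_const).isOpen_compl
    have hpos : 0 < μ {x : Fin d → ℝ | eval x Pb ≠ 0} :=
      hysupp j₀ _ hopen (by simp [hval, hj₀])
    have hzero : μ {x : Fin d → ℝ | eval x Pb ≠ 0} = 0 := by
      rw [ae_iff] at hae
      simpa using hae
    exact absurd hzero hpos.ne'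
  -- assemble the atomic decomposition
  set s : Finset (Fin d → ℝ) := hfin.toFinset with hs_def
  have hcoe : (s : Set (Fin d → ℝ)) = supp := hfin.coe_toFinset
  have hμs : ∀ E : Set (Fin d → ℝ), μ E = μ (E ∩ ↑s) := by
    intro E
    refine le_antisymm ?_ (measure_mono Set.inter_subset_left)
    have hsub : E ⊆ (E ∩ ↑s) ∪ suppᶜ := by
      intro z hz
      by_cases hzs : z ∈ supp
      · exact Or.inl ⟨hz, by rwa [hcoe]⟩
      · exact Or.inr hzs
    calc μ E ≤ μ ((E ∩ ↑s) ∪ suppᶜ) := measure_mono hsub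
      _ ≤ μ (E ∩ ↑s) + μ suppᶜ := measure_union_le _ _
      _ = μ (E ∩ ↑s) := by rw [hsuppc, add_zero]
  have hsum_singleton : ∀ t : Finset (Fin d → ℝ), μ (↑t) = ∑ x ∈ t, μ {x} := by
    intro t
    induction t using Finset.induction_on with
    | empty => simp
    | @insert a t ha ih =>
      rw [Finset.coe_insert, Set.insert_eq, Finset.sum_insert ha,
        measure_union ?_ t.measurableSet, ih]
      rw [Set.disjoint_left]
      intro z hz hz'
      rw [Set.mem_singleton_iff] at hz
      subst hz
      exact ha (by simpa using hz')
  have hs1 : μ (↑s) = 1 := by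
    have h4 := hμs Set.univ
    rw [Set.univ_inter] at h4
    rw [← h4, measure_univ]
  have hatom : ∀ x ∈ s, 0 < μ {x} := by
    intro x hxs
    have hx : x ∈ supp := by rw [← hcoe]; exact hxs
    have hUopen : IsOpen ((supp \ {x} : Set (Fin d → ℝ)))ᶜ :=
      ((hfin.subset Set.diff_subset).isClosed).isOpen_compl
    have hxU : x ∈ ((supp \ {x} : Set (Fin d → ℝ)))ᶜ := by simp
    have hpos := hx _ hUopen hxU
    have hsub : ((supp \ {x} : Set (Fin d → ℝ)))ᶜ ⊆ {x} ∪ suppᶜ := by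
      intro z hz
      by_cases hzs : z ∈ supp
      · left
        by_contra hzx
        exact hz ⟨hzs, hzx⟩
      · exact Or.inr hzs
    have hle : μ (((supp \ {x} : Set (Fin d → ℝ)))ᶜ) ≤ μ {x} + μ suppᶜ :=
      (measure_mono hsub).trans (measure_union_le _ _)
    rw [hsuppc, add_zero] at hle
    exact hpos.trans_le hle
  refine ⟨s, fun x => (μ {x}).toReal, ?_, ?_, ?_⟩
  · intro x hx
    exact ENNReal.toReal_pos (hatom x hx).ne' (measure_ne_top μ _)
  · have h5 : ∑ x ∈ s, (μ {x}).toReal = (∑ x ∈ s, μ {x}).toReal :=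
      (ENNReal.toReal_sum fun x _ => measure_ne_top μ _).symm
    rw [h5, ← hsum_singleton s, hs1, ENNReal.toReal_one]
  · ext E hE
    rw [Measure.finset_sum_apply]
    have hterm : ∀ x ∈ s, (ENNReal.ofReal ((μ {x}).toReal) • Measure.dirac x) E
        = if x ∈ E then μ {x} else 0 := by
      intro x _
      rw [Measure.smul_apply, smul_eq_mul, ENNReal.ofReal_toReal (measure_ne_top μ _),
        Measure.dirac_apply' _ hE]
      by_cases hxE : x ∈ E
      · simp [hxE]
      · simp [hxE]
    rw [Finset.sum_congr rfl hterm, hμs E]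
    have hEs : E ∩ ↑s = ↑(s.filter (· ∈ E)) := by
      ext z
      simp only [Set.mem_inter_iff, Finset.coe_filter, Set.mem_setOf_eq, Finset.mem_coe]
      tauto
    rw [hEs, hsum_singleton, Finset.sum_filter]
end

section
/- Let d ≥ 1, let α = (α_1,…,α_d) with each α_j > −1, and let k, m ∈ ℕ^d be multi-indices with |k| = |m| (equal total degree). Then for every i ∈ {1,…,d}, ∫_{(0,∞)^d} x_i L^α_k(x) L^α_m(x) x^α e^{−(x_1+…+x_d)} dx = 0 if k ≠ m, and = (2k_i+α_i+1) · ∏_{j=1}^d Γ(k_j+α_j+1)/k_j! if k = m. (This expresses that the preservation operators satisfy a⁰_{i|n} L^α_k = (2k_i+α_i+1) L^α_k, so the Jacobi sequence α_{e_i|n} of the multiple Laguerre measure acts diagonally in the multiple Laguerre basis with eigenvalues 2k_i+α_i+1.) -/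
open MeasureTheory

/-- The generalized Laguerre polynomials, as real functions: `L^a_0 = 1`,
`L^a_1(x) = a + 1 - x`, and `x L^a_n = -(n+1)L^a_{n+1} + (2n+a+1)L^a_n - (n+a)L^a_{n-1}`,
solved for `L^a_{n+1}`. -/
noncomputable def laguerreP (a : ℝ) : ℕ → ℝ → ℝ
  | 0, _ => 1
  | 1, x => a + 1 - x
  | (n + 2), x =>
      ((2 * ((n : ℝ) + 1) + a + 1 - x) * laguerreP a (n + 1) x -
        (((n : ℝ) + 1) + a) * laguerreP a n x) / ((n : ℝ) + 2)

/-- The multiple Laguerre polynomial on `ℝ₊^d`: `L^α_k(x) = ∏ᵢ L^{αᵢ}_{kᵢ}(xᵢ)`. -/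
noncomputable def multiLaguerre {d : ℕ} (α : Fin d → ℝ) (k : Fin d → ℕ)
    (x : Fin d → ℝ) : ℝ :=
  ∏ i, laguerreP (α i) (k i) (x i)

open Real Set



noncomputable def lagPoly (a : ℝ) : ℕ → Polynomial ℝ
  | 0 => 1
  | 1 => Polynomial.C (a + 1) - Polynomial.X
  | (n + 2) => Polynomial.C (((n : ℝ) + 2)⁻¹) *
      ((Polynomial.C (2 * ((n : ℝ) + 1) + a + 1) - Polynomial.X) * lagPoly a (n + 1)
        - Polynomial.C ((n : ℝ) + 1 + a) * lagPoly a n)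

lemma laguerreP_eq_eval (a : ℝ) : ∀ n x, laguerreP a n x = (lagPoly a n).eval x := by
  intro n
  induction n using Nat.strong_induction_on with
  | _ n ih =>
    match n with
    | 0 => intro x; simp [laguerreP, lagPoly]
    | 1 => intro x; simp [laguerreP, lagPoly]
    | (n + 2) =>
      intro x
      have h1 := ih (n + 1) (by omega)
      have h0 := ih n (by omega)
      have hn : ((n : ℝ) + 2) ≠ 0 := by positivity
      simp only [laguerreP, lagPoly, Polynomial.eval_mul, Polynomial.eval_sub,
        Polynomial.eval_C, Polynomial.eval_X, h1, h0]
      field_simp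

lemma lagPoly_natDegree_le (a : ℝ) : ∀ n, (lagPoly a n).natDegree ≤ n := by
  intro n
  induction n using Nat.strong_induction_on with
  | _ n ih =>
    match n with
    | 0 => simp [lagPoly]
    | 1 =>
      refine le_trans (Polynomial.natDegree_sub_le _ _) ?_
      simp
    | (n + 2) =>
      have h1 := ih (n + 1) (by omega)
      have h0 := ih n (by omega)
      rw [lagPoly]
      refine le_trans (Polynomial.natDegree_mul_le) ?_
      rw [Polynomial.natDegree_C, zero_add]
      refine le_trans (Polynomial.natDegree_sub_le _ _) ?_
      refine max_le (le_trans (Polynomial.natDegree_mul_le) ?_)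
        (le_trans (Polynomial.natDegree_mul_le) ?_)
      · have : (Polynomial.C (2 * ((n : ℝ) + 1) + a + 1) - Polynomial.X).natDegree ≤ 1 :=
          le_trans (Polynomial.natDegree_sub_le _ _)
            (max_le (le_trans (Polynomial.natDegree_C _).le (by omega)) Polynomial.natDegree_X_le)
        omega
      · simp only [Polynomial.natDegree_C, zero_add]; omega

lemma lagPoly_coeff_self (a : ℝ) : ∀ n, (lagPoly a n).coeff n = (-1) ^ n / (n.factorial : ℝ) := by
  intro n
  induction n using Nat.strong_induction_on with
  | _ n ih =>
    match n with
    | 0 => simp [lagPoly]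
    | 1 => 
      rw [lagPoly, Polynomial.coeff_sub, Polynomial.coeff_C, Polynomial.coeff_X_one]
      norm_num
    | (n + 2) =>
      have h1 := ih (n + 1) (by omega)
      have d1 := lagPoly_natDegree_le a (n + 1)
      have d0 := lagPoly_natDegree_le a n
      have c2a : (lagPoly a (n + 1)).coeff (n + 2) = 0 :=
        Polynomial.coeff_eq_zero_of_natDegree_lt (by omega)
      have c2b : (lagPoly a n).coeff (n + 2) = 0 :=
        Polynomial.coeff_eq_zero_of_natDegree_lt (by omega)
      rw [lagPoly]
      rw [Polynomial.coeff_C_mul, Polynomial.coeff_sub, Polynomial.coeff_C_mul, c2b,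
        sub_mul, Polynomial.coeff_sub, Polynomial.coeff_C_mul, c2a,
        Polynomial.coeff_X_mul, h1]
      have hfac : ((n + 2).factorial : ℝ) = ((n + 2) : ℕ) * ((n + 1).factorial : ℝ) := by
        rw [Nat.factorial_succ]; push_cast; ring
      have h2 : ((n:ℝ) + 2) ≠ 0 := by positivity
      have hf1 : ((n + 1).factorial : ℝ) ≠ 0 := by positivity
      rw [hfac]
      push_cast
      field_simp
      ring

variable {a : ℝ}

lemma gamma_exp_pos (ha : -1 < a) (j : ℕ) : 0 < a + j + 1 := by
  have : (0:ℝ) ≤ j := Nat.cast_nonneg j; linarith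

lemma integrableOn_monomial_weight (ha : -1 < a) (j : ℕ) :
    IntegrableOn (fun x : ℝ => x ^ j * (x ^ a * Real.exp (-x))) (Ioi 0) := by
  have hs : 0 < a + j + 1 := gamma_exp_pos ha j
  refine (Real.GammaIntegral_convergent hs).congr_fun (fun x hx => ?_) measurableSet_Ioi
  have hx : (0:ℝ) < x := hx
  rw [show a + (j:ℝ) + 1 - 1 = a + j by ring]
  beta_reduce
  rw [Real.rpow_add hx, Real.rpow_natCast]
  ring

lemma integral_monomial_weight (ha : -1 < a) (j : ℕ) :
    ∫ x in Ioi 0, x ^ j * (x ^ a * Real.exp (-x)) = Real.Gamma (a + j + 1) := by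
  have hs : 0 < a + j + 1 := gamma_exp_pos ha j
  rw [Real.Gamma_eq_integral hs]
  refine setIntegral_congr_fun measurableSet_Ioi (fun x hx => ?_)
  have hx : (0:ℝ) < x := hx
  rw [show a + (j:ℝ) + 1 - 1 = a + j by ring, Real.rpow_add hx, Real.rpow_natCast]
  ring

lemma integrableOn_poly_weight (ha : -1 < a) (p : Polynomial ℝ) :
    IntegrableOn (fun x : ℝ => p.eval x * (x ^ a * Real.exp (-x))) (Ioi 0) := by
  have heq : ∀ x : ℝ, p.eval x * (x ^ a * Real.exp (-x)) =
      ∑ r ∈ Finset.range (p.natDegree + 1),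
        p.coeff r * (x ^ r * (x ^ a * Real.exp (-x))) := by
    intro x
    rw [Polynomial.eval_eq_sum_range, Finset.sum_mul]
    exact Finset.sum_congr rfl fun r _ => by ring
  have : IntegrableOn (fun x : ℝ => ∑ r ∈ Finset.range (p.natDegree + 1),
      p.coeff r * (x ^ r * (x ^ a * Real.exp (-x)))) (Ioi 0) :=
    integrable_finset_sum _ fun r _ => (integrableOn_monomial_weight ha r).const_mul _
  exact this.congr_fun (fun x _ => (heq x).symm) measurableSet_Ioi







variable {a : ℝ}

lemma integrableOn_monomial_lag (ha : -1 < a) (j n : ℕ) :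
    IntegrableOn (fun x : ℝ => x ^ j * laguerreP a n x * (x ^ a * Real.exp (-x))) (Ioi 0) := by
  have := integrableOn_poly_weight ha (Polynomial.X ^ j * lagPoly a n)
  refine this.congr_fun (fun x _ => ?_) measurableSet_Ioi
  simp [laguerreP_eq_eval, mul_assoc]

lemma choose_cast_id (j n : ℕ) :
    ((n : ℝ) + 1) * (j.choose (n + 1) : ℝ) = ((j : ℝ) - n) * (j.choose n : ℝ) := by
  rcases le_or_gt (n + 1) j with h | h
  · have hc := congrArg (fun t : ℕ => (t : ℝ)) (Nat.choose_succ_right_eq j n)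
    simp only [Nat.cast_mul] at hc
    push_cast [Nat.cast_sub (by omega : n ≤ j)] at hc
    linarith
  · have h0 : j.choose (n + 1) = 0 := Nat.choose_eq_zero_of_lt (by omega)
    rcases eq_or_lt_of_le (by omega : j ≤ n) with rfl | hlt
    · simp [h0]
    · simp [h0, Nat.choose_eq_zero_of_lt hlt]

lemma moment (ha : -1 < a) :
    ∀ n (j : ℕ), ∫ x in Ioi 0, x ^ j * laguerreP a n x * (x ^ a * Real.exp (-x)) =
      (-1) ^ n * (j.choose n : ℝ) * Real.Gamma (a + j + 1) := by
  intro n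
  induction n using Nat.strong_induction_on with
  | _ n ih =>
    match n with
    | 0 =>
      intro j
      simp only [laguerreP, mul_one, pow_zero, Nat.choose_zero_right, Nat.cast_one, one_mul]
      exact integral_monomial_weight ha j
    | 1 =>
      intro j
      have key : ∀ x : ℝ, x ^ j * laguerreP a 1 x * (x ^ a * Real.exp (-x)) =
          (a + 1) * (x ^ j * (x ^ a * Real.exp (-x))) - x ^ (j + 1) * (x ^ a * Real.exp (-x)) := by
        intro x; simp only [laguerreP]; ring
      rw [show (fun x : ℝ => x ^ j * laguerreP a 1 x * (x ^ a * Real.exp (-x))) =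
          (fun x : ℝ => (a + 1) * (x ^ j * (x ^ a * Real.exp (-x))) -
            x ^ (j + 1) * (x ^ a * Real.exp (-x))) from funext key]
      rw [integral_sub ((integrableOn_monomial_weight ha j).const_mul _)
        (integrableOn_monomial_weight ha (j + 1)), integral_const_mul,
        integral_monomial_weight ha j, integral_monomial_weight ha (j + 1)]
      have hΓ : Real.Gamma (a + (j + 1 : ℕ) + 1) = (a + j + 1) * Real.Gamma (a + j + 1) := by
        have : a + ((j + 1 : ℕ) : ℝ) + 1 = (a + j + 1) + 1 := by push_cast; ring
        rw [this, Real.Gamma_add_one (ne_of_gt (gamma_exp_pos ha j))]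
      rw [hΓ, Nat.choose_one_right]
      ring
    | (n + 2) =>
      intro j
      have h1 := ih (n + 1) (by omega) j
      have h1' := ih (n + 1) (by omega) (j + 1)
      have h0 := ih n (by omega) j
      have hn2 : ((n : ℝ) + 2) ≠ 0 := by positivity
      have key : ∀ x : ℝ, x ^ j * laguerreP a (n + 2) x * (x ^ a * Real.exp (-x)) =
          ((2 * ((n : ℝ) + 1) + a + 1) * (x ^ j * laguerreP a (n + 1) x * (x ^ a * Real.exp (-x)))
            - x ^ (j + 1) * laguerreP a (n + 1) x * (x ^ a * Real.exp (-x))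
            - (((n : ℝ) + 1) + a) * (x ^ j * laguerreP a n x * (x ^ a * Real.exp (-x))))
            / ((n : ℝ) + 2) := by
        intro x
        simp only [laguerreP]
        field_simp
        ring
      rw [show (fun x : ℝ => x ^ j * laguerreP a (n + 2) x * (x ^ a * Real.exp (-x))) =
          (fun x : ℝ =>
            ((2 * ((n : ℝ) + 1) + a + 1) * (x ^ j * laguerreP a (n + 1) x * (x ^ a * Real.exp (-x)))
            - x ^ (j + 1) * laguerreP a (n + 1) x * (x ^ a * Real.exp (-x))
            - (((n : ℝ) + 1) + a) * (x ^ j * laguerreP a n x * (x ^ a * Real.exp (-x))))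
            / ((n : ℝ) + 2)) from funext key]
      have hA : IntegrableOn (fun x : ℝ => (2 * ((n : ℝ) + 1) + a + 1) *
          (x ^ j * laguerreP a (n + 1) x * (x ^ a * Real.exp (-x)))) (Ioi 0) :=
        (integrableOn_monomial_lag ha j (n + 1)).const_mul _
      have hB : IntegrableOn (fun x : ℝ =>
          x ^ (j + 1) * laguerreP a (n + 1) x * (x ^ a * Real.exp (-x))) (Ioi 0) :=
        integrableOn_monomial_lag ha (j + 1) (n + 1)
      have hC : IntegrableOn (fun x : ℝ => (((n : ℝ) + 1) + a) *
          (x ^ j * laguerreP a n x * (x ^ a * Real.exp (-x)))) (Ioi 0) :=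
        (integrableOn_monomial_lag ha j n).const_mul _
      have hAB : IntegrableOn (fun x : ℝ => (2 * ((n : ℝ) + 1) + a + 1) *
          (x ^ j * laguerreP a (n + 1) x * (x ^ a * Real.exp (-x)))
          - x ^ (j + 1) * laguerreP a (n + 1) x * (x ^ a * Real.exp (-x))) (Ioi 0) := hA.sub hB
      rw [integral_div, integral_sub hAB hC, integral_sub hA hB,
        integral_const_mul, integral_const_mul, h1, h1', h0]
      have hΓ : Real.Gamma (a + ((j:ℝ) + 1) + 1) = (a + j + 1) * Real.Gamma (a + j + 1) := by
        have : a + ((j:ℝ) + 1) + 1 = (a + j + 1) + 1 := by ring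
        rw [this, Real.Gamma_add_one (ne_of_gt (gamma_exp_pos ha j))]
      have r1 := choose_cast_id j (n + 1)
      have r2 := choose_cast_id j n
      have r3 : ((j + 1).choose (n + 1) : ℝ) = (j.choose n : ℝ) + (j.choose (n + 1) : ℝ) := by
        rw [Nat.choose_succ_succ]; push_cast; ring
      push_cast at r1 r2 r3 ⊢
      rw [div_eq_iff hn2, hΓ]
      simp only [pow_succ]
      set G := Real.Gamma (a + j + 1)
      set y := ((-1 : ℝ)) ^ n
      linear_combination (-(y * G)) * r1 + (-(y * G)) * r2 + ((a + (j:ℝ) + 1) * y * G) * r3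




variable {a : ℝ}

lemma lag_expand (a : ℝ) (m : ℕ) (x : ℝ) :
    laguerreP a m x = ∑ r ∈ Finset.range (m + 1), (lagPoly a m).coeff r * x ^ r := by
  rw [laguerreP_eq_eval,
    Polynomial.eval_eq_sum_range' (Nat.lt_succ_of_le (lagPoly_natDegree_le a m))]

lemma lag_orth_le (ha : -1 < a) {n m : ℕ} (h : m ≤ n) :
    ∫ x in Ioi 0, laguerreP a n x * laguerreP a m x * (x ^ a * Real.exp (-x)) =
      if n = m then Real.Gamma ((n : ℝ) + a + 1) / (n.factorial : ℝ) else 0 := by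
  have key : ∀ x : ℝ, laguerreP a n x * laguerreP a m x * (x ^ a * Real.exp (-x)) =
      ∑ r ∈ Finset.range (m + 1),
        (lagPoly a m).coeff r * (x ^ r * laguerreP a n x * (x ^ a * Real.exp (-x))) := by
    intro x
    rw [show laguerreP a n x * laguerreP a m x * (x ^ a * Real.exp (-x)) =
        laguerreP a m x * (laguerreP a n x * (x ^ a * Real.exp (-x))) by ring,
      lag_expand a m x, Finset.sum_mul]
    exact Finset.sum_congr rfl fun r _ => by ring
  rw [show (fun x : ℝ => laguerreP a n x * laguerreP a m x * (x ^ a * Real.exp (-x))) =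
      (fun x : ℝ => ∑ r ∈ Finset.range (m + 1),
        (lagPoly a m).coeff r * (x ^ r * laguerreP a n x * (x ^ a * Real.exp (-x))))
      from funext key]
  rw [integral_finset_sum _ fun r _ => ((integrableOn_monomial_lag ha r n).const_mul _)]
  have hval : ∀ r ∈ Finset.range (m + 1),
      ∫ x in Ioi 0, (lagPoly a m).coeff r * (x ^ r * laguerreP a n x * (x ^ a * Real.exp (-x)))
        = (lagPoly a m).coeff r * ((-1) ^ n * (r.choose n : ℝ) * Real.Gamma (a + r + 1)) := by
    intro r _
    rw [integral_const_mul, moment ha n r]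
  rw [Finset.sum_congr rfl hval]
  rcases eq_or_lt_of_le h with rfl | hlt
  · rw [if_pos rfl]
    rw [Finset.sum_eq_single m]
    · rw [lagPoly_coeff_self, Nat.choose_self]
      have hsq : ((-1 : ℝ)) ^ m * (-1) ^ m = 1 := by
        rw [← pow_add]
        exact (neg_one_pow_eq_one_iff_even (by norm_num)).2 (Even.add_self m)
      rw [show a + (m:ℝ) + 1 = (m:ℝ) + a + 1 by ring]
      linear_combination (Real.Gamma ((m:ℝ) + a + 1) / (m.factorial : ℝ)) * hsq
    · intro r hr hrn
      have : r < m := by simp at hr; omega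
      rw [Nat.choose_eq_zero_of_lt this]
      simp
    · intro hn; simp at hn
  · rw [if_neg (by omega)]
    refine Finset.sum_eq_zero fun r hr => ?_
    have : r < n := by simp at hr; omega
    rw [Nat.choose_eq_zero_of_lt this]
    simp

lemma lag_orth (ha : -1 < a) (n m : ℕ) :
    ∫ x in Ioi 0, laguerreP a n x * laguerreP a m x * (x ^ a * Real.exp (-x)) =
      if n = m then Real.Gamma ((n : ℝ) + a + 1) / (n.factorial : ℝ) else 0 := by
  rcases le_or_gt m n with h | h
  · exact lag_orth_le ha h
  · have := lag_orth_le ha h.le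
    rw [show (fun x : ℝ => laguerreP a n x * laguerreP a m x * (x ^ a * Real.exp (-x))) =
        (fun x : ℝ => laguerreP a m x * laguerreP a n x * (x ^ a * Real.exp (-x)))
        from funext fun x => by ring]
    rw [this, if_neg (by omega), if_neg (by omega)]

lemma integrableOn_lag_mul_lag (ha : -1 < a) (n m : ℕ) :
    IntegrableOn (fun x : ℝ =>
      laguerreP a n x * laguerreP a m x * (x ^ a * Real.exp (-x))) (Ioi 0) := by
  have := integrableOn_poly_weight ha (lagPoly a n * lagPoly a m)
  refine this.congr_fun (fun x _ => ?_) measurableSet_Ioi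
  simp [laguerreP_eq_eval, mul_assoc]

lemma lag_diag_x (ha : -1 < a) (n : ℕ) :
    ∫ x in Ioi 0, x * (laguerreP a n x * laguerreP a n x) * (x ^ a * Real.exp (-x)) =
      (2 * (n : ℝ) + a + 1) * (Real.Gamma ((n : ℝ) + a + 1) / (n.factorial : ℝ)) := by
  match n with
  | 0 =>
    have key : (fun x : ℝ => x * (laguerreP a 0 x * laguerreP a 0 x) * (x ^ a * Real.exp (-x)))
        = fun x : ℝ => x ^ 1 * laguerreP a 0 x * (x ^ a * Real.exp (-x)) := by
      funext x; simp [laguerreP]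
    rw [key, moment ha 0 1]
    have h1 : a + (1 : ℕ) + 1 = (a + 1) + 1 := by push_cast; ring
    rw [h1, Real.Gamma_add_one (by linarith)]
    norm_num
  | (p + 1) =>
    have hp2 : ((p : ℝ) + 2) ≠ 0 := by positivity
    have key : ∀ x : ℝ,
        x * (laguerreP a (p + 1) x * laguerreP a (p + 1) x) * (x ^ a * Real.exp (-x)) =
        (2 * ((p : ℝ) + 1) + a + 1) *
            (laguerreP a (p + 1) x * laguerreP a (p + 1) x * (x ^ a * Real.exp (-x)))
          - (((p : ℝ) + 1) + a) * (laguerreP a p x * laguerreP a (p + 1) x * (x ^ a * Real.exp (-x)))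
          - ((p : ℝ) + 2) * (laguerreP a (p + 2) x * laguerreP a (p + 1) x * (x ^ a * Real.exp (-x))) := by
      intro x
      have hdef : laguerreP a (p + 2) x =
          ((2 * ((p : ℝ) + 1) + a + 1 - x) * laguerreP a (p + 1) x -
            (((p : ℝ) + 1) + a) * laguerreP a p x) / ((p : ℝ) + 2) := rfl
      have hx : x * laguerreP a (p + 1) x = (2 * ((p : ℝ) + 1) + a + 1) * laguerreP a (p + 1) x
          - (((p : ℝ) + 1) + a) * laguerreP a p x - ((p : ℝ) + 2) * laguerreP a (p + 2) x := by
        rw [hdef]; field_simp; ring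
      calc x * (laguerreP a (p + 1) x * laguerreP a (p + 1) x) * (x ^ a * Real.exp (-x))
          = (x * laguerreP a (p + 1) x) * laguerreP a (p + 1) x * (x ^ a * Real.exp (-x)) := by ring
        _ = _ := by rw [hx]; ring
    rw [show (fun x : ℝ =>
        x * (laguerreP a (p + 1) x * laguerreP a (p + 1) x) * (x ^ a * Real.exp (-x))) =
        (fun x : ℝ =>
        (2 * ((p : ℝ) + 1) + a + 1) *
            (laguerreP a (p + 1) x * laguerreP a (p + 1) x * (x ^ a * Real.exp (-x)))
          - (((p : ℝ) + 1) + a) * (laguerreP a p x * laguerreP a (p + 1) x * (x ^ a * Real.exp (-x)))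
          - ((p : ℝ) + 2) * (laguerreP a (p + 2) x * laguerreP a (p + 1) x * (x ^ a * Real.exp (-x))))
        from funext key]
    have hA : IntegrableOn (fun x : ℝ => (2 * ((p : ℝ) + 1) + a + 1) *
        (laguerreP a (p + 1) x * laguerreP a (p + 1) x * (x ^ a * Real.exp (-x)))) (Ioi 0) :=
      (integrableOn_lag_mul_lag ha (p + 1) (p + 1)).const_mul _
    have hB : IntegrableOn (fun x : ℝ => (((p : ℝ) + 1) + a) *
        (laguerreP a p x * laguerreP a (p + 1) x * (x ^ a * Real.exp (-x)))) (Ioi 0) :=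
      (integrableOn_lag_mul_lag ha p (p + 1)).const_mul _
    have hC : IntegrableOn (fun x : ℝ => ((p : ℝ) + 2) *
        (laguerreP a (p + 2) x * laguerreP a (p + 1) x * (x ^ a * Real.exp (-x)))) (Ioi 0) :=
      (integrableOn_lag_mul_lag ha (p + 2) (p + 1)).const_mul _
    have hAB : IntegrableOn (fun x : ℝ => (2 * ((p : ℝ) + 1) + a + 1) *
        (laguerreP a (p + 1) x * laguerreP a (p + 1) x * (x ^ a * Real.exp (-x)))
        - (((p : ℝ) + 1) + a) *
        (laguerreP a p x * laguerreP a (p + 1) x * (x ^ a * Real.exp (-x)))) (Ioi 0) := hA.sub hB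
    rw [integral_sub hAB hC, integral_sub hA hB,
      integral_const_mul, integral_const_mul, integral_const_mul,
      lag_orth ha (p + 1) (p + 1), lag_orth ha p (p + 1), lag_orth ha (p + 2) (p + 1),
      if_pos rfl, if_neg (by omega), if_neg (by omega)]
    push_cast
    ring


/-- The preservation operators of the multiple Laguerre polynomials act diagonally: for
`|k| = |m|`, `∫ xᵢ L^α_k L^α_m x^α e^{-|x|₁} dx` vanishes if `k ≠ m` and equals
`(2kᵢ+αᵢ+1) ∏ⱼ Γ(kⱼ+αⱼ+1)/kⱼ!` if `k = m` (so `a⁰_{i|n} L^α_k = (2kᵢ+αᵢ+1) L^α_k`). -/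
theorem multiLaguerre_preservation_diagonal
    (d : ℕ) (hd : 1 ≤ d) (α : Fin d → ℝ) (hα : ∀ j, -1 < α j)
    (k m : Fin d → ℕ) (hkm : ∑ j, k j = ∑ j, m j) (i : Fin d) :
    ∫ x in Set.univ.pi fun _ : Fin d => Set.Ioi (0 : ℝ),
      x i * multiLaguerre α k x * multiLaguerre α m x *
        ((∏ j, x j ^ α j) * Real.exp (-∑ j, x j)) =
      if k = m then
        (2 * (k i : ℝ) + α i + 1) * ∏ j, Real.Gamma ((k j : ℝ) + α j + 1) / ((k j).factorial : ℝ)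
      else 0 := by
  classical
  set f : Fin d → ℝ → ℝ := fun j t =>
    (if j = i then t else 1) * (laguerreP (α j) (k j) t * laguerreP (α j) (m j) t *
      (t ^ (α j) * Real.exp (-t))) with hf
  have hprod : ∀ x : Fin d → ℝ,
      x i * multiLaguerre α k x * multiLaguerre α m x *
        ((∏ j, x j ^ α j) * Real.exp (-∑ j, x j)) = ∏ j, f j (x j) := by
    intro x
    have hexp : Real.exp (-∑ j, x j) = ∏ j, Real.exp (-(x j)) := by
      rw [← Real.exp_sum, ← Finset.sum_neg_distrib]
    have hite : (∏ j, if j = i then x j else 1) = x i := by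
      rw [Finset.prod_ite_eq' Finset.univ i (fun j => x j)]
      simp
    simp only [hf, multiLaguerre]
    rw [hexp, ← hite]
    rw [← Finset.prod_mul_distrib, ← Finset.prod_mul_distrib, ← Finset.prod_mul_distrib,
      ← Finset.prod_mul_distrib]
    exact Finset.prod_congr rfl fun j _ => by ring
  have hset : MeasurableSet (Set.univ.pi fun _ : Fin d => Set.Ioi (0 : ℝ)) :=
    MeasurableSet.univ_pi fun _ => measurableSet_Ioi
  rw [← integral_indicator hset]
  have hind : (Set.univ.pi fun _ : Fin d => Set.Ioi (0 : ℝ)).indicator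
      (fun x : Fin d → ℝ => x i * multiLaguerre α k x * multiLaguerre α m x *
        ((∏ j, x j ^ α j) * Real.exp (-∑ j, x j))) =
      fun x : Fin d → ℝ => ∏ j, (Set.Ioi (0 : ℝ)).indicator (f j) (x j) := by
    funext x
    by_cases hx : x ∈ Set.univ.pi fun _ : Fin d => Set.Ioi (0 : ℝ)
    · rw [Set.indicator_of_mem hx, hprod]
      exact Finset.prod_congr rfl fun j _ =>
        (Set.indicator_of_mem (hx j (Set.mem_univ j)) _).symm
    · rw [Set.indicator_of_notMem hx]
      obtain ⟨j, hj⟩ : ∃ j, x j ∉ Set.Ioi (0 : ℝ) := by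
        by_contra hc
        push_neg at hc
        exact hx fun j _ => hc j
      exact (Finset.prod_eq_zero (Finset.mem_univ j)
        (Set.indicator_of_notMem hj _)).symm
  rw [hind, MeasureTheory.integral_fintype_prod_volume_eq_prod (ι := Fin d)
    (fun j => (Set.Ioi (0 : ℝ)).indicator (f j))]
  have hfac : ∀ j, (∫ t, (Set.Ioi (0 : ℝ)).indicator (f j) t) = ∫ t in Set.Ioi 0, f j t :=
    fun j => integral_indicator measurableSet_Ioi
  rw [Finset.prod_congr rfl fun j _ => hfac j]
  by_cases hkm' : k = m
  · subst hkm'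
    rw [if_pos rfl]
    have hval : ∀ j, (∫ t in Set.Ioi 0, f j t) =
        (if j = i then 2 * (k i : ℝ) + α i + 1 else 1) *
          (Real.Gamma ((k j : ℝ) + α j + 1) / ((k j).factorial : ℝ)) := by
      intro j
      by_cases hj : j = i
      · subst hj
        simp only [hf, eq_self_iff_true, if_true]
        have : (fun t : ℝ => t * (laguerreP (α j) (k j) t * laguerreP (α j) (k j) t *
            (t ^ (α j) * Real.exp (-t)))) =
            fun t : ℝ => t * (laguerreP (α j) (k j) t * laguerreP (α j) (k j) t) *
              (t ^ (α j) * Real.exp (-t)) := funext fun t => by ring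
        rw [this, lag_diag_x (hα j) (k j)]
      · simp only [hf, if_neg hj, one_mul]
        rw [lag_orth (hα j) (k j) (k j), if_pos rfl]
    rw [Finset.prod_congr rfl fun j _ => hval j, Finset.prod_mul_distrib,
      Finset.prod_ite_eq' Finset.univ i]
    simp
  · rw [if_neg hkm']
    have hex : ∃ j, j ≠ i ∧ k j ≠ m j := by
      by_contra hc
      push_neg at hc
      apply hkm'
      have hki : k i = m i := by
        have h1 : ∑ j, k j = k i + ∑ j ∈ Finset.univ.erase i, k j :=
          (Finset.add_sum_erase _ _ (Finset.mem_univ i)).symm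
        have h2 : ∑ j, m j = m i + ∑ j ∈ Finset.univ.erase i, m j :=
          (Finset.add_sum_erase _ _ (Finset.mem_univ i)).symm
        have h3 : ∑ j ∈ Finset.univ.erase i, k j = ∑ j ∈ Finset.univ.erase i, m j :=
          Finset.sum_congr rfl fun j hj => hc j (Finset.ne_of_mem_erase hj)
        omega
      funext j
      by_cases hj : j = i
      · rw [hj, hki]
      · exact hc j hj
    obtain ⟨j₀, hj₀i, hj₀⟩ := hex
    refine Finset.prod_eq_zero (Finset.mem_univ j₀) ?_
    simp only [hf, if_neg hj₀i, one_mul]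
    rw [lag_orth (hα j₀) (k j₀) (m j₀), if_neg hj₀]
end
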